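/- arXiv:1910.05764 — 5 statements merged into one kernel-verified Lean document; each statement's English description precedes it below -/
import Mathlib

section
/- Let n, d ≥ 1 be integers and I a fixed sequence of length d in {1,...,n}. Then limsup_{N→∞} |S_{N,I}|^{1/N} ≤ (n^d - 1)^{1/d} < n. -/
/-!
An `I`-avoiding word of length `M + N` splits into `I`-avoiding words of lengths `M` and `N`,
so the counts are submultiplicative. Among the words of length `d = |I|` only `I` itself fails
to avoid `I`, hence `|S_{dq+r,I}| ≤ (n^d - 1)^q n^r`, and taking `N`-th roots gives the bound
`(n^d - 1)^{1/d}` on the limsup.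
-/

open Filter Topology

namespace List

variable {α : Type*}

instance finite_subtype_length_eq_and [Finite α] (N : ℕ) (p : List α → Prop) :
    Finite {a : List α // a.length = N ∧ p a} :=
  Set.Finite.to_subtype ((finite_length_eq α N).subset fun _ h => h.1)

theorem natCard_length_eq [Fintype α] (N : ℕ) :
    Nat.card {a : List α // a.length = N} = Fintype.card α ^ N := by
  change Nat.card (Vector α N) = _
  rw [Nat.card_eq_fintype_card, card_vector]

theorem natCard_length_eq_not_infix_le [Fintype α] (I : List α) (N : ℕ) :
    Nat.card {a : List α // a.length = N ∧ ¬ I <:+: a} ≤ Fintype.card α ^ N := by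
  rw [← natCard_length_eq]
  exact Nat.card_mono (s := {a : List α | a.length = N ∧ ¬ I <:+: a}) (finite_length_eq α N)
    fun _ h => h.1

theorem natCard_length_eq_length_not_infix [Fintype α] (I : List α) :
    Nat.card {a : List α // a.length = I.length ∧ ¬ I <:+: a} =
      Fintype.card α ^ I.length - 1 := by
  have hset : {a : List α | a.length = I.length ∧ ¬ I <:+: a} =
      {a | a.length = I.length} \ {I} := by
    ext a
    simp only [Set.mem_ofPred_eq, Set.mem_sdiff, Set.mem_singleton_iff, and_congr_right_iff]
    intro ha
    exact ⟨fun h hI => h (hI ▸ infix_refl I), fun h hI => h (hI.eq_of_length ha.symm).symm⟩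
  change Nat.card {a : List α | a.length = I.length ∧ ¬ I <:+: a} = _
  have hI : I ∈ {a : List α | a.length = I.length} := rfl
  rw [hset, Nat.card_coe_set_eq, Set.ncard_sdiff_singleton_of_mem hI, ← Nat.card_coe_set_eq]
  exact congrArg (· - 1) (natCard_length_eq I.length)

theorem natCard_length_add_not_infix_le [Finite α] (I : List α) (M N : ℕ) :
    Nat.card {a : List α // a.length = M + N ∧ ¬ I <:+: a} ≤
      Nat.card {a : List α // a.length = M ∧ ¬ I <:+: a} *
        Nat.card {a : List α // a.length = N ∧ ¬ I <:+: a} := by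
  rw [← Nat.card_prod]
  refine Nat.card_le_card_of_injective
    (fun a =>
      (⟨a.1.take M, by simp [a.2.1], fun h => a.2.2 (h.trans (take_prefix M a.1).isInfix)⟩,
        ⟨a.1.drop M, by simp [a.2.1], fun h => a.2.2 (h.trans (drop_suffix M a.1).isInfix)⟩))
    fun a b h => ?_
  simp only [Prod.mk.injEq, Subtype.mk.injEq] at h
  exact Subtype.ext (by rw [← take_append_drop M a.1, ← take_append_drop M b.1, h.1, h.2])

theorem natCard_not_infix_le [Fintype α] (I : List α) (q r : ℕ) :
    Nat.card {a : List α // a.length = I.length * q + r ∧ ¬ I <:+: a} ≤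
      (Fintype.card α ^ I.length - 1) ^ q * Fintype.card α ^ r := by
  induction q with
  | zero => simpa using natCard_length_eq_not_infix_le I r
  | succ q ih =>
    calc _ ≤ Nat.card {a : List α // a.length = I.length ∧ ¬ I <:+: a} *
          Nat.card {a : List α // a.length = I.length * q + r ∧ ¬ I <:+: a} := by
          rw [show I.length * (q + 1) + r = I.length + (I.length * q + r) by ring]
          exact natCard_length_add_not_infix_le I _ _
      _ ≤ (Fintype.card α ^ I.length - 1) *
          ((Fintype.card α ^ I.length - 1) ^ q * Fintype.card α ^ r) := by
          rw [natCard_length_eq_length_not_infix]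
          exact Nat.mul_le_mul_left _ ih
      _ = _ := by ring

end List

theorem tendsto_natCast_div_div_atTop {d : ℕ} (hd : d ≠ 0) :
    Tendsto (fun N : ℕ => ((N / d : ℕ) : ℝ) / N) atTop (𝓝 (1 / d)) := by
  have hfloor := (tendsto_nat_floor_div_atTop (R := ℝ)).comp
    (tendsto_natCast_atTop_atTop.atTop_div_const (r := (d : ℝ)) (by positivity))
  convert hfloor.mul_const (1 / (d : ℝ)) using 1
  · ext N
    have hd' : (d : ℝ) ≠ 0 := Nat.cast_ne_zero.mpr hd
    simp only [Function.comp_apply, Nat.floor_div_natCast, Nat.floor_natCast, div_div,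
      mul_one_div, div_mul_cancel₀ _ hd']
  · simp

theorem limsup_rpow_one_div_le_of_le_pow_div {a : ℕ → ℝ} {x C : ℝ} {d : ℕ} (hd : d ≠ 0)
    (hx : 0 ≤ x) (hC : 0 < C) (ha₀ : ∀ N, 0 ≤ a N) (ha : ∀ N, a N ≤ x ^ (N / d) * C) :
    limsup (fun N : ℕ => a N ^ (1 / (N : ℝ))) atTop ≤ x ^ (1 / (d : ℝ)) := by
  set b : ℕ → ℝ := fun N => x ^ (((N / d : ℕ) : ℝ) / N) * C ^ (1 / (N : ℝ))
  have hab : ∀ N, a N ^ (1 / (N : ℝ)) ≤ b N := fun N => calc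
    a N ^ (1 / (N : ℝ)) ≤ (x ^ (N / d) * C) ^ (1 / (N : ℝ)) :=
      Real.rpow_le_rpow (ha₀ N) (ha N) (by positivity)
    _ = b N := by
      rw [Real.mul_rpow (by positivity) hC.le, ← Real.rpow_natCast, ← Real.rpow_mul hx,
        mul_one_div]
  have hb : Tendsto b atTop (𝓝 (x ^ (1 / (d : ℝ)))) := by
    have hxq := (Real.continuousAt_const_rpow' (a := x) (by positivity)).tendsto.comp
      (tendsto_natCast_div_div_atTop hd)
    have hC1 := (Real.continuousAt_const_rpow hC.ne').tendsto.comp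
      tendsto_one_div_atTop_nhds_zero_nat
    simpa [b] using hxq.mul hC1
  calc limsup (fun N : ℕ => a N ^ (1 / (N : ℝ))) atTop ≤ limsup b atTop :=
        limsup_le_limsup (Eventually.of_forall hab)
          (isCoboundedUnder_le_of_le atTop fun N => Real.rpow_nonneg (ha₀ N) _)
          hb.isBoundedUnder_le
    _ = x ^ (1 / (d : ℝ)) := hb.limsup_eq

/-- For `n, d ≥ 1` and a fixed word `I` of length `d` over `{1,…,n}`,
`limsup_N |S_{N,I}|^{1/N} ≤ (n^d - 1)^{1/d} < n`, where `S_{N,I}` is the set of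
length-`N` words avoiding `I` as a contiguous subword. -/
theorem stmt1 (n d : ℕ) (hn : 1 ≤ n) (hd : 1 ≤ d) (I : List (Fin n)) (hI : I.length = d) :
    Filter.limsup
      (fun N : ℕ =>
        (Nat.card {a : List (Fin n) // a.length = N ∧ ¬ I <:+: a} : ℝ) ^ (1 / (N : ℝ)))
      Filter.atTop ≤ ((n : ℝ) ^ d - 1) ^ (1 / (d : ℝ)) ∧
    ((n : ℝ) ^ d - 1) ^ (1 / (d : ℝ)) < n := by
  have hd₀ : d ≠ 0 := by omega
  have hn₀ : (0 : ℝ) < n := by exact_mod_cast hn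
  have hcast : ((n ^ d - 1 : ℕ) : ℝ) = (n : ℝ) ^ d - 1 := by
    rw [Nat.cast_sub (Nat.one_le_pow _ _ hn)]
    push_cast
    ring
  refine ⟨?_, ?_⟩
  · rw [← hcast]
    refine limsup_rpow_one_div_le_of_le_pow_div hd₀ (Nat.cast_nonneg _) (pow_pos hn₀ d)
      (fun N => Nat.cast_nonneg _) fun N => ?_
    have hcard := List.natCard_not_infix_le I (N / d) (N % d)
    rw [hI, Nat.div_add_mod, Fintype.card_fin] at hcard
    calc _ ≤ (((n ^ d - 1) ^ (N / d) * n ^ (N % d) : ℕ) : ℝ) := by exact_mod_cast hcard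
      _ ≤ _ := by
        push_cast
        gcongr
        · exact_mod_cast hn
        · exact (Nat.mod_lt N (by omega)).le
  · calc ((n : ℝ) ^ d - 1) ^ (1 / (d : ℝ)) < ((n : ℝ) ^ d) ^ (1 / (d : ℝ)) :=
          Real.rpow_lt_rpow (by rw [← hcast]; positivity) (by linarith) (by positivity)
      _ = n := by rw [one_div, Real.pow_rpow_inv_natCast hn₀.le hd₀]
end

section
/- Fix integers n, d ≥ 1, a prime p > 2^{dn}, and the score function σ defined via F_i(j) as above. Let 1 ≤ t ≤ N - d + 1 and let a, b be distinct sequences of length N in {1,...,n} with a_j = b_j for all j outside the range t ≤ j < t + d. Then σ(a) ≠ σ(b). -/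
/-!
Modulo `p`, `σ(a)` is `∑ⱼ 2 ^ r(aⱼ, j)`. Positions outside the window contribute the same to
`σ(a)` and `σ(b)`. Inside it the numbers `jn + i` run through `dn` consecutive integers, so the
exponents `r(aⱼ, j)` are distinct residues mod `dn` and determine the pairs `(j, aⱼ)`. Each window
sum is then a sum of distinct powers of two below `2 ^ (dn) < p`. Two such sums that are
congruent mod `p` are equal, so by uniqueness of binary expansions they have the same set of
exponents, and hence `a = b` on the window.
-/
open Finset

theorem Nat.mul_add_mod_injOn_Ico_prod_Icc (n d t : ℕ) :
    Set.InjOn (fun x : ℕ × ℕ => (x.1 * n + x.2) % (d * n))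
      (Set.Ico t (t + d) ×ˢ Set.Icc 1 n) := by
  rintro ⟨j, i⟩ ⟨⟨hj, hj'⟩, hi, hi'⟩ ⟨k, l⟩ ⟨⟨hk, hk'⟩, hl, hl'⟩ h
  have hjk : j * n + i = k * n + l := by
    refine Nat.ModEq.eq_of_abs_lt h ?_
    simp only at hj hj' hi hi' hk hk' hl hl'
    rw [abs_sub_lt_iff]
    constructor <;> push_cast <;> nlinarith
  obtain rfl : j = k := by nlinarith
  rw [Nat.add_left_cancel hjk]

theorem Nat.eq_of_sum_two_pow_modEq {s u : Finset ℕ} {m p : ℕ} (hs : ∀ k ∈ s, k < m)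
    (hu : ∀ k ∈ u, k < m) (hp : 2 ^ m ≤ p) (h : ∑ k ∈ s, 2 ^ k ≡ ∑ k ∈ u, 2 ^ k [MOD p]) :
    s = u :=
  Finset.geomSum_injective le_rfl <| h.eq_of_lt_of_lt
    ((Nat.geomSum_lt le_rfl hs).trans_le hp) ((Nat.geomSum_lt le_rfl hu).trans_le hp)

theorem Finset.sum_modEq_sum_of_eqOn_compl {ι : Type*} [Fintype ι] [DecidableEq ι]
    {s : Finset ι} {f g : ι → ℕ} {p : ℕ} (hfg : ∀ i ∉ s, f i = g i)
    (h : ∑ i, f i ≡ ∑ i, g i [MOD p]) : ∑ i ∈ s, f i ≡ ∑ i ∈ s, g i [MOD p] := by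
  rw [← sum_add_sum_compl s f, ← sum_add_sum_compl s g,
    sum_congr rfl fun i hi => hfg i (mem_compl.1 hi)] at h
  exact h.add_right_cancel' _

theorem stmt3_general (n d p : ℕ) (hp2 : 2 ^ (d * n) < p)
    (F : ℕ → ℕ → ℕ)
    (hF : ∀ i j : ℕ, 1 ≤ i → i ≤ n → 1 ≤ j →
      F i j % p = 2 ^ ((j * n + i) % (d * n)) % p ∧ j * p ≤ F i j ∧ F i j < (j + 1) * p)
    (N t : ℕ)
    (a b : Fin N → Fin n) (hab : a ≠ b)
    (hagree : ∀ j : Fin N, ¬ (t ≤ (j : ℕ) + 1 ∧ (j : ℕ) + 1 < t + d) → a j = b j) :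
    ∑ j : Fin N, F ((a j : ℕ) + 1) ((j : ℕ) + 1) ≠
      ∑ j : Fin N, F ((b j : ℕ) + 1) ((j : ℕ) + 1) := by
  intro hsum
  set W := univ.filter fun j : Fin N => t ≤ (j : ℕ) + 1 ∧ (j : ℕ) + 1 < t + d
  let r : ℕ × ℕ → ℕ := fun x => (x.1 * n + x.2) % (d * n)
  let pos (c : Fin N → Fin n) (j : Fin N) : ℕ × ℕ := ((j : ℕ) + 1, (c j : ℕ) + 1)
  have hpos (c) : ∀ j ∈ W, pos c j ∈ Set.Ico t (t + d) ×ˢ Set.Icc 1 n := fun j hj => by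
    simp only [W, mem_filter] at hj
    exact ⟨hj.2, Nat.le_add_left 1 _, (c j).isLt⟩
  have hinj (c) : Set.InjOn (r ∘ pos c) W :=
    (Nat.mul_add_mod_injOn_Ico_prod_Icc n d t).comp
      (fun j _ k _ h => Fin.ext (by simpa [pos] using congrArg Prod.fst h)) (hpos c)
  have hlt (c) : ∀ k ∈ W.image (r ∘ pos c), k < d * n := by
    simp only [mem_image]
    rintro k ⟨j, hj, rfl⟩
    obtain ⟨⟨hj₁, hj₂⟩, hi₁, hi₂⟩ := hpos c j hj
    exact Nat.mod_lt _ (Nat.mul_pos (by omega) (by omega))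
  have hsum_modEq (c : Fin N → Fin n) :
      ∑ j, F (pos c j).2 (pos c j).1 ≡ ∑ j, 2 ^ r (pos c j) [MOD p] :=
    Nat.ModEq.sum fun j _ => (hF _ _ (Nat.le_add_left 1 _) (c j).isLt (Nat.le_add_left 1 _)).1
  have hwin : ∑ k ∈ W.image (r ∘ pos a), 2 ^ k ≡ ∑ k ∈ W.image (r ∘ pos b), 2 ^ k [MOD p] := by
    rw [sum_image (hinj a), sum_image (hinj b)]
    refine sum_modEq_sum_of_eqOn_compl (fun j hj => ?_)
      (((hsum_modEq a).symm.trans (hsum ▸ Nat.ModEq.refl _)).trans (hsum_modEq b))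
    simp [pos, hagree j (by simpa [W] using hj)]
  have himage := Nat.eq_of_sum_two_pow_modEq (hlt a) (hlt b) hp2.le hwin
  refine hab (funext fun j => ?_)
  by_cases hj : j ∈ W
  · obtain ⟨k, hk, hkj⟩ := mem_image.1 (himage ▸ mem_image_of_mem _ hj)
    have := Nat.mul_add_mod_injOn_Ico_prod_Icc n d t (hpos b k hk) (hpos a j hj) hkj
    simp only [pos, Prod.mk.injEq, add_left_inj] at this
    obtain rfl := Fin.ext this.1
    exact (Fin.ext this.2).symm
  · exact hagree j (by simpa [W] using hj)

/-- Fix `n, d ≥ 1`, a prime `p > 2^{dn}`, and the score function `σ` built from `F` as in the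
paper.  If `1 ≤ t ≤ N - d + 1` and `a, b` are distinct sequences of length `N` in `{1,…,n}`
(modelled as `a b : Fin N → Fin n`, position `j+1` carrying value `a j + 1`) which agree at
every (1-indexed) position `j` outside the range `t ≤ j < t + d`, then `σ(a) ≠ σ(b)`. -/
theorem stmt3 (n d p : ℕ) (hn : 1 ≤ n) (hd : 1 ≤ d) (hp : p.Prime) (hp2 : 2 ^ (d * n) < p)
    (F : ℕ → ℕ → ℕ)
    (hF : ∀ i j : ℕ, 1 ≤ i → i ≤ n → 1 ≤ j →
      F i j % p = 2 ^ ((j * n + i) % (d * n)) % p ∧ j * p ≤ F i j ∧ F i j < (j + 1) * p)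
    (N t : ℕ) (ht1 : 1 ≤ t) (ht2 : t + d ≤ N + 1)
    (a b : Fin N → Fin n) (hab : a ≠ b)
    (hagree : ∀ j : Fin N, ¬ (t ≤ (j : ℕ) + 1 ∧ (j : ℕ) + 1 < t + d) → a j = b j) :
    ∑ j : Fin N, F ((a j : ℕ) + 1) ((j : ℕ) + 1) ≠
      ∑ j : Fin N, F ((b j : ℕ) + 1) ((j : ℕ) + 1) :=
  stmt3_general n d p hp2 F hF N t a b hab hagree
end

section
/- Let k be an algebraically closed field and let n < m be positive integers. The set N_{n,m} of n × m matrices over k of rank strictly less than n is a Zariski-closed subset of the affine space M_{n×m}(k) ≅ k^{nm} of dimension at most nm - (1 + m - n); that is, N_{n,m} has codimension at least 1 + m - n. -/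
/-!
A matrix of rank `< n` has a row `j` that is a linear combination of the other rows, so the set
lies in the union over `j` of the images of polynomial maps `k^((n-1)(m+1)) → k^(nm)`, sending
the other rows and the coefficients to the matrix. Hence every prime containing the vanishing
ideal contains the kernel of one of the comorphisms into a polynomial ring in `(n-1)(m+1)`
variables.

A chain `P₀ < ⋯ < P_N` of primes gives elements `xᵢ ∈ P_{i+1} \ P_i` that are
algebraically independent modulo `P₀`: writing a relation as `X₀ ^ r * (c + X₀ * h)` with
`c ≠ 0`, primality together with `x₀ ∉ P₀` and `x₀ ∈ P₁` turns it into the relation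
`c(x₁, …) ∈ P₁` one step up the chain. Pushed into the polynomial ring they stay
independent, so `N ≤ (n-1)(m+1) = nm + n - m - 1` by comparing transcendence degrees.
Closedness: the rows are dependent iff all maximal minors vanish.
-/

open Polynomial in
theorem Polynomial.exists_coeff_ne_zero_map_mem_of_eval₂_mem {A R : Type*} [CommRing A]
    [CommRing R] (φ : A →+* R) {P P' : Ideal R} [hP : P.IsPrime] (hPP' : P ≤ P') {y : R}
    (hyP' : y ∈ P') (hyP : y ∉ P) {p : A[X]} (hp : p ≠ 0) (hmem : p.eval₂ φ y ∈ P) :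
    ∃ c ≠ 0, φ c ∈ P' := by
  obtain ⟨q, hpq, hq⟩ := exists_eq_pow_rootMultiplicity_mul_and_not_dvd p hp 0
  rw [map_zero, sub_zero, X_dvd_iff] at hq
  refine ⟨q.coeff 0, hq, ?_⟩
  rw [hpq, map_zero, sub_zero, eval₂_mul, eval₂_X_pow] at hmem
  have hq : q.eval₂ φ y ∈ P' :=
    hPP' ((hP.mem_or_mem hmem).resolve_left fun h => hyP (hP.mem_of_pow_mem _ h))
  rw [← divX_mul_X_add q, eval₂_add, eval₂_mul, eval₂_X, eval₂_C] at hq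
  exact (Ideal.add_mem_iff_right _ (Ideal.mul_mem_left _ _ hyP')).mp hq

theorem MvPolynomial.aeval_eq_eval₂_finSuccEquiv {R S : Type*} [CommRing R] [CommRing S]
    [Algebra R S] {N : ℕ} (x : Fin (N + 1) → S) (Q : MvPolynomial (Fin (N + 1)) R) :
    aeval x Q = (finSuccEquiv R N Q).eval₂ (aeval (R := R) (Fin.tail x)).toRingHom (x 0) := by
  induction Q using MvPolynomial.induction_on with
  | C a => simp [finSuccEquiv_apply]
  | add p q hp hq => simp [hp, hq]
  | mul_X p i hp =>
    rw [map_mul, map_mul, Polynomial.eval₂_mul, hp]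
    congr 1
    cases i using Fin.cases with
    | zero => simp [finSuccEquiv_X_zero]
    | succ j => simp [finSuccEquiv_X_succ, Fin.tail]

section PrimeChain

open MvPolynomial

variable {k R : Type*} [Field k] [CommRing R] [Algebra k R]

theorem MvPolynomial.eq_zero_of_aeval_mem_of_chain {N : ℕ} (P : Fin (N + 1) → Ideal R)
    [hPprime : ∀ i, (P i).IsPrime] (hP : Monotone P) (x : Fin N → R)
    (hxP : ∀ i, x i ∈ P i.succ) (hxP' : ∀ i, x i ∉ P i.castSucc)
    {Q : MvPolynomial (Fin N) k} (hQ : aeval x Q ∈ P 0) :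
    Q = 0 := by
  induction N with
  | zero =>
    rw [eq_C_of_isEmpty Q, aeval_C, C_eq_zero] at *
    by_contra hc
    exact (hPprime 0).ne_top (Ideal.eq_top_of_isUnit_mem _ hQ ((IsUnit.mk0 _ hc).map _))
  | succ N ih =>
    by_contra hQ0
    rw [aeval_eq_eval₂_finSuccEquiv] at hQ
    have hQ0' : finSuccEquiv k N Q ≠ 0 := (map_ne_zero_iff _ (finSuccEquiv k N).injective).mpr hQ0
    obtain ⟨c, hc0, hc⟩ := Polynomial.exists_coeff_ne_zero_map_mem_of_eval₂_mem _
      (hP (Fin.zero_le 1)) (hxP 0) (hxP' 0) hQ0' hQ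
    exact hc0 (ih (P ∘ Fin.succ) (hPprime := fun i => hPprime i.succ)
      (hP.comp Fin.strictMono_succ.monotone) (Fin.tail x)
      (fun i => hxP i.succ) (fun i => by simpa [Fin.tail] using hxP' i.succ) hc)

theorem LTSeries.length_le_trdeg_of_ker_le {A : Type*} [CommRing A] [Algebra k A]
    (p : LTSeries (PrimeSpectrum R)) (f : R →ₐ[k] A) (hf : RingHom.ker f ≤ p.head.asIdeal) :
    (p.length : Cardinal) ≤ Algebra.trdeg k A := by
  choose x hx using fun i : Fin p.length =>
    SetLike.exists_of_lt ((PrimeSpectrum.asIdeal_lt_asIdeal _ _).mpr (p.step i))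
  have hind : AlgebraicIndependent k (f ∘ x) := by
    refine algebraicIndependent_iff.mpr fun Q hQ => ?_
    refine eq_zero_of_aeval_mem_of_chain (fun i => (p i).asIdeal)
      (fun i j hij => (PrimeSpectrum.asIdeal_le_asIdeal _ _).mpr (p.monotone hij)) x
      (fun i => (hx i).1) (fun i => (hx i).2) (hf ?_)
    rwa [RingHom.mem_ker, comp_aeval_apply]
  simpa using hind.lift_cardinalMk_le_trdeg

theorem ringKrullDim_quotient_le_of_iInf_ker_le {ι : Type*} [Fintype ι] {σ : ι → Type*}
    [∀ i, Finite (σ i)] (f : ∀ i, R →ₐ[k] MvPolynomial (σ i) k) {I : Ideal R}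
    (hI : ⨅ i, RingHom.ker (f i) ≤ I)
    {D : ℕ} (hD : ∀ i, Nat.card (σ i) ≤ D) : ringKrullDim (R ⧸ I) ≤ D := by
  refine iSup_le fun p => ?_
  let q := p.map _
    (RingHom.strictMono_comap_of_surjective (Ideal.Quotient.mk_surjective (I := I)))
  have hIq : I ≤ q.head.asIdeal := fun a ha => by
    simp [q, Ideal.Quotient.eq_zero_iff_mem.mpr ha]
  obtain ⟨i, -, hi⟩ := (q.head.isPrime.inf_le' (s := Finset.univ)).mp
    (by simpa [Finset.inf_univ_eq_iInf] using hI.trans hIq)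
  have hlen := q.length_le_trdeg_of_ker_le (f i) hi
  rw [MvPolynomial.trdeg_of_isDomain, ← Nat.cast_card, Cardinal.lift_natCast,
    Nat.cast_le] at hlen
  exact_mod_cast hlen.trans (hD i)

end PrimeChain

section RowDependence

open MvPolynomial

variable {k : Type*} [Field k]

theorem MvPolynomial.iInf_ker_aeval_le_vanishingIdeal {σ ι : Type*} {τ : ι → Type*}
    (φ : ∀ i, σ → MvPolynomial (τ i) k) {V : Set (σ → k)}
    (hV : ∀ x ∈ V, ∃ i a, x = fun s => eval a (φ i s)) :
    ⨅ i, RingHom.ker (aeval (R := k) (φ i)) ≤ vanishingIdeal k V := by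
  intro f hf x hx
  obtain ⟨i, a, rfl⟩ := hV x hx
  have hfi : aeval (φ i) f = 0 := Ideal.mem_iInf.mp hf i
  simp only [← aeval_eq_eval]
  rw [← comp_aeval_apply, hfi, map_zero]

namespace Matrix

variable {ι κ : Type*} [Fintype ι]

theorem rank_lt_card_height_iff_not_linearIndependent_row [Fintype κ] (M : Matrix ι κ k) :
    M.rank < Fintype.card ι ↔ ¬ LinearIndependent k M.row := by
  rw [linearIndependent_iff_card_eq_finrank_span, Set.finrank, ← rank_eq_finrank_span_row]
  exact M.rank_le_card_height.lt_iff_ne.trans ne_comm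

theorem linearIndependent_row_iff_exists_det_submatrix_ne_zero [Fintype κ] [DecidableEq ι]
    (M : Matrix ι κ k) :
    LinearIndependent k M.row ↔ ∃ c : ι → κ, (M.submatrix id c).det ≠ 0 := by
  refine ⟨fun h => ?_, fun ⟨c, hc⟩ => ?_⟩
  · obtain ⟨κ', a, ha, hspan, hind⟩ := exists_linearIndependent' k M.col
    have : Fintype κ' := Fintype.ofInjective a ha
    have hcard : Fintype.card ι = Fintype.card κ' := by
      rw [← h.rank_matrix, rank_eq_finrank_span_cols, ← hspan, finrank_span_eq_card hind]
    let e := Fintype.equivOfCardEq hcard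
    refine ⟨a ∘ e, ?_⟩
    rw [← isUnit_iff_ne_zero, ← isUnit_iff_isUnit_det, ← linearIndependent_cols_iff_isUnit]
    exact hind.comp e e.injective
  · rw [← isUnit_iff_ne_zero, ← isUnit_iff_isUnit_det,
      ← linearIndependent_rows_iff_isUnit] at hc
    exact LinearIndependent.of_comp (LinearMap.funLeft k k c) hc

theorem setOf_not_linearIndependent_row_eq_zeroLocus [Fintype κ] [DecidableEq ι] :
    {x : ι × κ → k | ¬ LinearIndependent k (of fun i j => x (i, j)).row} =
      zeroLocus k (Ideal.span (Set.range fun c : ι → κ =>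
        ((mvPolynomialX ι κ k).submatrix id c).det)) := by
  ext x
  have hminor (c : ι → κ) : aeval x ((mvPolynomialX ι κ k).submatrix id c).det =
      ((of fun i j => x (i, j)).submatrix id c).det := by
    rw [AlgHom.map_det]
    congr 1
    ext i j
    simp
  rw [Set.mem_ofPred_eq, zeroLocus_span, Set.mem_ofPred_eq,
    linearIndependent_row_iff_exists_det_submatrix_ne_zero, Set.forall_mem_range]
  simp only [hminor, not_exists, not_not]

variable [DecidableEq ι]

/-- The variable `(i, some l)` is the entry of row `i` in column `l`, and `(i, none)` is the
coefficient of row `i` in row `j`. -/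
abbrev RowCombinationVars (κ : Type*) (j : ι) : Type _ := {i // i ≠ j} × Option κ

variable (k κ) in
noncomputable def rowCombinationMatrix (j : ι) :
    ι × κ → MvPolynomial (RowCombinationVars κ j) k
  | (i, l) => if h : i = j then ∑ i' : {i // i ≠ j}, X (i', none) * X (i', some l)
      else X (⟨i, h⟩, some l)

theorem natCard_rowCombinationVars [Fintype κ] (j : ι) :
    Nat.card (RowCombinationVars κ j) = (Fintype.card ι - 1) * (Fintype.card κ + 1) := by
  simp [Nat.card_eq_fintype_card, Fintype.card_subtype_compl]

theorem exists_eval_rowCombinationMatrix_eq (M : Matrix ι κ k)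
    (hM : ¬ LinearIndependent k M.row) :
    ∃ j, ∃ a : RowCombinationVars κ j → k,
      (fun p => M p.1 p.2) = fun p => eval a (rowCombinationMatrix k κ j p) := by
  obtain ⟨j, hj⟩ : ∃ j, M.row j ∈ Submodule.span k (M.row '' ↑(Finset.univ.erase j)) := by
    simpa [linearIndependent_iff_notMem_span] using hM
  obtain ⟨c, hc⟩ := (Submodule.mem_span_image_finset_iff_exists_fun' k).mp hj
  refine ⟨j, fun q => q.2.elim (c q.1) (M q.1), ?_⟩
  funext ⟨i, l⟩
  by_cases h : i = j
  · subst h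
    simp only [rowCombinationMatrix, dif_pos, map_sum, map_mul, eval_X, Option.elim]
    rw [← Finset.sum_subtype (Finset.univ.erase i) (by simp) fun i' => c i' * M i' l]
    simpa using (congrFun hc l).symm
  · simp [rowCombinationMatrix, h]

end Matrix

end RowDependence

theorem stmt6_general (k : Type*) [Field k] (n m : ℕ) :
    (∃ I : Ideal (MvPolynomial (Fin n × Fin m) k),
        {x : Fin n × Fin m → k | (Matrix.of fun i j => x (i, j)).rank < n} =
          MvPolynomial.zeroLocus k I) ∧
    ringKrullDim (MvPolynomial (Fin n × Fin m) k ⧸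
        MvPolynomial.vanishingIdeal k
          {x : Fin n × Fin m → k | (Matrix.of fun i j => x (i, j)).rank < n}) ≤
      ((n * m + n - m - 1 : ℕ) : WithBot ℕ∞) := by
  classical
  have hV : {x : Fin n × Fin m → k | (Matrix.of fun i j => x (i, j)).rank < n} =
      {x | ¬ LinearIndependent k (Matrix.of fun i j => x (i, j)).row} := by
    ext x
    simpa using (Matrix.of fun i j => x (i, j)).rank_lt_card_height_iff_not_linearIndependent_row
  refine ⟨⟨_, hV.trans Matrix.setOf_not_linearIndependent_row_eq_zeroLocus⟩, ?_⟩
  refine ringKrullDim_quotient_le_of_iInf_ker_le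
    (fun j => MvPolynomial.aeval (Matrix.rowCombinationMatrix k (Fin m) j))
    (MvPolynomial.iInf_ker_aeval_le_vanishingIdeal _ fun x hx => ?_) fun j => ?_
  · rw [hV] at hx
    exact Matrix.exists_eval_rowCombinationMatrix_eq _ hx
  · rw [Matrix.natCard_rowCombinationVars, Fintype.card_fin, Fintype.card_fin]
    rcases n with _ | n
    · simp
    · rw [Nat.add_sub_cancel, Nat.succ_mul, Nat.mul_succ]
      omega

/-- Over an algebraically closed field `k`, for `1 ≤ n < m`, the set of `n × m` matrices of
rank `< n` is Zariski-closed in the affine space `k^{nm}` of matrices, and its dimension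
(the Krull dimension of its coordinate ring) is at most `nm - (1 + m - n)`, i.e. it has
codimension at least `1 + m - n`. -/
theorem stmt6 (k : Type*) [Field k] [IsAlgClosed k] (n m : ℕ) (hn : 1 ≤ n) (hnm : n < m) :
    (∃ I : Ideal (MvPolynomial (Fin n × Fin m) k),
        {x : Fin n × Fin m → k | (Matrix.of fun i j => x (i, j)).rank < n} =
          MvPolynomial.zeroLocus k I) ∧
    ringKrullDim (MvPolynomial (Fin n × Fin m) k ⧸
        MvPolynomial.vanishingIdeal k
          {x : Fin n × Fin m → k | (Matrix.of fun i j => x (i, j)).rank < n}) ≤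
      ((n * m + n - m - 1 : ℕ) : WithBot ℕ∞) :=
  stmt6_general k n m
end

section
/- Let c_{n,i} be the coefficients of the formal power series exp(Σ_{i=1}^∞ n^{θ(i)} t^i / i), where θ(i) is the largest odd divisor of i and n ≥ 2 is an integer. Then limsup_{i→∞} (log c_{n,i})/i ≥ log n. -/
/-!
Since `θ i ≤ i`, each of the `i` terms in the recursion for `i * c i` is at most `n ^ i`, so
`0 < c i ≤ n ^ i` and `log (c i) / i` is bounded above by `log n`. At an odd index `m` we have
`θ m = m`, and the single term `n ^ θ m * c 0 = n ^ m` of the recursion gives `m * c m ≥ n ^ m`,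
so `log (c m) / m ≥ log n - log m / m` along the odd indices, where `log m / m → 0`.
-/

open Filter Finset Real Topology

/-- `c` is the coefficient sequence of `exp (∑_{i ≥ 1} a i * t ^ i / i)`: the recursion is
`(exp g)' = g' * exp g` read coefficientwise. -/
structure IsExpCoeffs (a c : ℕ → ℝ) : Prop where
  zero : c 0 = 1
  succ : ∀ i : ℕ, ((i : ℝ) + 1) * c (i + 1) = ∑ j ∈ range (i + 1), a (j + 1) * c (i - j)

namespace IsExpCoeffs

variable {a c : ℕ → ℝ}

theorem pos (h : IsExpCoeffs a c) (ha : ∀ j, 0 ≤ a (j + 1)) (ha₁ : 0 < a 1) (i : ℕ) :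
    0 < c i := by
  induction i using Nat.strong_induction_on with
  | _ i ih =>
    rcases i with _ | k
    · simp [h.zero]
    have hterm : a 1 * c k ≤ ∑ j ∈ range (k + 1), a (j + 1) * c (k - j) :=
      single_le_sum (f := fun j => a (j + 1) * c (k - j))
        (fun j _ => mul_nonneg (ha j) (ih _ (by omega)).le) (mem_range.2 k.succ_pos)
    have hsucc : 0 < ((k : ℝ) + 1) * c (k + 1) :=
      h.succ k ▸ (mul_pos ha₁ (ih k k.lt_succ_self)).trans_le hterm
    exact pos_of_mul_pos_right hsucc (by positivity)

theorem le_pow (h : IsExpCoeffs a c) (hc : ∀ i, 0 ≤ c i) {r : ℝ} (ha₀ : ∀ j, 0 ≤ a (j + 1))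
    (ha : ∀ j, a (j + 1) ≤ r ^ (j + 1)) (i : ℕ) : c i ≤ r ^ i := by
  induction i using Nat.strong_induction_on with
  | _ i ih =>
    rcases i with _ | k
    · simp [h.zero]
    have hterm : ∀ j ∈ range (k + 1), a (j + 1) * c (k - j) ≤ r ^ (k + 1) := by
      intro j hj
      have hjk : j ≤ k := Nat.lt_succ_iff.1 (mem_range.1 hj)
      calc a (j + 1) * c (k - j) ≤ r ^ (j + 1) * r ^ (k - j) :=
            mul_le_mul (ha j) (ih _ (by omega)) (hc _) ((ha₀ j).trans (ha j))
        _ = r ^ (k + 1) := by rw [← pow_add]; congr 1; omega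
    have hsum := sum_le_sum hterm
    rw [← h.succ k, sum_const, card_range, nsmul_eq_mul] at hsum
    push_cast at hsum
    exact le_of_mul_le_mul_left hsum (by positivity)

theorem le_mul_succ (h : IsExpCoeffs a c) (hc : ∀ i, 0 ≤ c i) (ha : ∀ j, 0 ≤ a (j + 1))
    (i : ℕ) : a (i + 1) ≤ ((i : ℝ) + 1) * c (i + 1) := by
  have hterm := single_le_sum (f := fun j => a (j + 1) * c (i - j))
    (fun j _ => mul_nonneg (ha j) (hc _)) (mem_range.2 i.lt_succ_self)
  simpa [h.zero, ← h.succ i] using hterm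

end IsExpCoeffs

def IsLargestOddDivisor (d i : ℕ) : Prop :=
  Odd d ∧ d ∣ i ∧ ∀ e : ℕ, Odd e → e ∣ i → e ≤ d

namespace IsLargestOddDivisor

variable {d i : ℕ}

theorem le (h : IsLargestOddDivisor d i) (hi : 0 < i) : d ≤ i :=
  Nat.le_of_dvd hi h.2.1

theorem eq_self_of_odd (h : IsLargestOddDivisor d i) (hi : Odd i) : d = i :=
  le_antisymm (h.le hi.pos) (h.2.2 i hi dvd_rfl)

end IsLargestOddDivisor

theorem tendsto_log_natCast_div_self : Tendsto (fun m : ℕ => log m / m) atTop (𝓝 0) := by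
  have h := tendsto_pow_log_div_mul_add_atTop 1 0 1 one_ne_zero
  simp only [pow_one, one_mul, add_zero] at h
  exact h.comp tendsto_natCast_atTop_atTop

theorem le_limsup_of_frequently_ge_of_tendsto {α : Type*} {f : Filter α} {u v : α → ℝ} {L : ℝ}
    (hv : Tendsto v f (𝓝 L)) (hvu : ∃ᶠ x in f, v x ≤ u x)
    (hu : IsBoundedUnder (· ≤ ·) f u) : L ≤ limsup u f := by
  refine le_of_forall_sub_le fun ε hε => le_limsup_of_frequently_le ?_ hu
  exact (hvu.and_eventually (hv.eventually (eventually_ge_nhds (sub_lt_self L hε)))).mono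
    fun x ⟨hx, hx'⟩ => hx'.trans hx

theorem le_limsup_log_div_of_pow_le {c : ℕ → ℝ} {r : ℝ} (hr : 1 ≤ r) (hc : ∀ i, 0 < c i)
    (hup : ∀ i, c i ≤ r ^ i) (hlow : ∃ᶠ m in atTop, r ^ m ≤ m * c m) :
    log r ≤ limsup (fun i : ℕ => log (c i) / i) atTop := by
  refine le_limsup_of_frequently_ge_of_tendsto (v := fun m : ℕ => log r - log m / m)
    (by simpa using tendsto_log_natCast_div_self.const_sub (log r)) ?_ ?_
  · refine (hlow.and_eventually (eventually_gt_atTop 0)).mono fun m ⟨hm, hm₀⟩ => ?_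
    have hm₀' : (0 : ℝ) < m := Nat.cast_pos.2 hm₀
    have hlog := log_le_log (by positivity) hm
    rw [log_pow, log_mul hm₀'.ne' (hc m).ne'] at hlog
    rw [sub_le_iff_le_add, ← add_div, le_div_iff₀ hm₀']
    linarith
  · refine isBoundedUnder_of ⟨log r, fun i => ?_⟩
    rcases i.eq_zero_or_pos with rfl | hi
    · simpa using log_nonneg hr
    rw [div_le_iff₀ (Nat.cast_pos.2 hi), mul_comm, ← log_pow]
    exact log_le_log (hc i) (hup i)

/-- Let `θ i` be the largest odd divisor of `i ≥ 1` and let `c i = c_{n,i}` be the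
coefficients of the formal power series `exp(Σ_{i≥1} n^{θ(i)} t^i / i)` (characterized by
`c 0 = 1` and the differential recursion `(i+1) c_{i+1} = Σ_{j=0}^i n^{θ(j+1)} c_{i-j}`,
obtained from `exp(g)' = g'·exp(g)`).  Then `limsup_{i→∞} (log c_i)/i ≥ log n`. -/
theorem stmt16 (n : ℕ) (hn : 2 ≤ n) (θ : ℕ → ℕ)
    (hθ : ∀ i, 1 ≤ i → Odd (θ i) ∧ θ i ∣ i ∧ ∀ e : ℕ, Odd e → e ∣ i → e ≤ θ i)
    (c : ℕ → ℝ) (hc0 : c 0 = 1)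
    (hc : ∀ i : ℕ, ((i : ℝ) + 1) * c (i + 1) =
      ∑ j ∈ Finset.range (i + 1), (n : ℝ) ^ θ (j + 1) * c (i - j)) :
    Real.log n ≤ Filter.limsup (fun i : ℕ => Real.log (c i) / (i : ℝ)) Filter.atTop := by
  have hn₁ : (1 : ℝ) ≤ n := by exact_mod_cast (by omega : 1 ≤ n)
  have hθ' (j : ℕ) : IsLargestOddDivisor (θ (j + 1)) (j + 1) := hθ (j + 1) j.succ_pos
  have hexp : IsExpCoeffs (fun j => (n : ℝ) ^ θ j) c := ⟨hc0, hc⟩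
  have ha₀ (j : ℕ) : (0 : ℝ) ≤ (n : ℝ) ^ θ (j + 1) := by positivity
  have hpos := hexp.pos ha₀ (by positivity)
  have hup := hexp.le_pow (fun i => (hpos i).le) ha₀
    fun j => pow_le_pow_right₀ hn₁ ((hθ' j).le j.succ_pos)
  refine le_limsup_log_div_of_pow_le hn₁ hpos hup ?_
  refine frequently_atTop.2 fun N => ⟨2 * N + 1, by omega, ?_⟩
  have hodd : Odd (2 * N + 1) := odd_two_mul_add_one N
  have hlow := hexp.le_mul_succ (fun i => (hpos i).le) ha₀ (2 * N)
  rwa [(hθ' (2 * N)).eq_self_of_odd hodd, ← Nat.cast_succ] at hlow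
end

section
/- Let n ≥ 2 be an integer. The series Σ_{i=1}^∞ n^{θ(i)} t^i / i, where θ(i) is the largest odd divisor of i, tends to +∞ as t increases to 1/n (t real, 0 < t < 1/n). -/
/-!
At `t = 1/n` the terms with odd index `i = 2k + 1` are `n^i (1/n)^i / i = 1/(2k + 1)`, so the
series diverges there like the harmonic series. All terms are nonnegative and continuous in `t`,
so every partial sum at `1/n` is a lower bound for the full series near `1/n`; for `t < 1/n`
the series converges, being dominated by the geometric series `Σ (n t)^i`.
-/

open Filter Topology Finset

theorem tendsto_tsum_nhdsWithin_atTop {X : Type*} [TopologicalSpace X] {f : ℕ → X → ℝ}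
    {a : X} {s : Set X} (hcont : ∀ i, ContinuousWithinAt (f i) s a)
    (hnonneg : ∀ i, ∀ x ∈ s, 0 ≤ f i x) (hsum : ∀ x ∈ s, Summable fun i => f i x)
    (hdiv : Tendsto (fun N => ∑ i ∈ range N, f i a) atTop atTop) :
    Tendsto (fun x => ∑' i, f i x) (𝓝[s] a) atTop := by
  refine tendsto_atTop.2 fun M => ?_
  obtain ⟨N, hN⟩ := (hdiv.eventually_gt_atTop M).exists
  have hpartial : Tendsto (fun x => ∑ i ∈ range N, f i x) (𝓝[s] a)
      (𝓝 (∑ i ∈ range N, f i a)) :=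
    tendsto_finsetSum _ fun i _ => hcont i
  filter_upwards [hpartial.eventually (eventually_ge_nhds hN), self_mem_nhdsWithin]
    with x hx hxs
  exact le_trans hx (Summable.sum_le_tsum _ (fun i _ => hnonneg i x hxs) (hsum x hxs))

theorem Real.not_summable_one_div_two_mul_add_one :
    ¬Summable fun k : ℕ => 1 / (2 * (k : ℝ) + 1) := by
  intro h
  apply Real.not_summable_one_div_natCast
  rw [← summable_nat_add_iff 1]
  refine (h.mul_left 2).of_nonneg_of_le (fun k => by positivity) fun k => ?_
  rw [mul_one_div, div_le_div_iff₀ (by positivity) (by positivity)]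
  push_cast
  linarith

section OddPartSeries

variable {n : ℕ} {θ : ℕ → ℕ}

theorem summable_pow_mul_pow_div_of_lt_inv (hn : 1 ≤ n) (hθ : ∀ i, θ (i + 1) ≤ i + 1)
    {t : ℝ} (ht₀ : 0 ≤ t) (ht : t < 1 / n) :
    Summable fun i : ℕ => (n : ℝ) ^ θ (i + 1) * t ^ (i + 1) / ((i : ℝ) + 1) := by
  have hn₁ : (1 : ℝ) ≤ n := mod_cast hn
  have hnt : (n : ℝ) * t < 1 := by
    rwa [lt_div_iff₀ (by positivity), mul_comm] at ht
  have hgeom : Summable fun i : ℕ => ((n : ℝ) * t) ^ (i + 1) :=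
    (summable_nat_add_iff 1).2 (summable_geometric_of_lt_one (by positivity) hnt)
  refine hgeom.of_nonneg_of_le (fun i => by positivity) fun i => ?_
  calc (n : ℝ) ^ θ (i + 1) * t ^ (i + 1) / ((i : ℝ) + 1)
      ≤ (n : ℝ) ^ θ (i + 1) * t ^ (i + 1) := div_le_self (by positivity) (by simp)
    _ ≤ (n : ℝ) ^ (i + 1) * t ^ (i + 1) :=
        mul_le_mul_of_nonneg_right (pow_le_pow_right₀ hn₁ (hθ i)) (by positivity)
    _ = ((n : ℝ) * t) ^ (i + 1) := (mul_pow _ _ _).symm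

theorem tendsto_sum_range_pow_mul_inv_pow_div_atTop (hn : n ≠ 0)
    (hθ : ∀ k, θ (2 * k + 1) = 2 * k + 1) :
    Tendsto (fun N => ∑ i ∈ range N, (n : ℝ) ^ θ (i + 1) * (1 / n) ^ (i + 1) / ((i : ℝ) + 1))
      atTop atTop := by
  rw [← not_summable_iff_tendsto_nat_atTop_of_nonneg fun i => by positivity]
  intro h
  have hodd : (fun k : ℕ => 1 / (2 * (k : ℝ) + 1)) =
      (fun i : ℕ => (n : ℝ) ^ θ (i + 1) * (1 / n) ^ (i + 1) / ((i : ℝ) + 1)) ∘ (2 * ·) := by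
    funext k
    have : (n : ℝ) ^ (2 * k + 1) ≠ 0 := by positivity
    simp only [Function.comp_apply, hθ, one_div_pow, mul_one_div, div_self this]
    push_cast
    ring
  exact Real.not_summable_one_div_two_mul_add_one <|
    hodd ▸ h.comp_injective (mul_right_injective₀ (two_ne_zero' ℕ))

end OddPartSeries

theorem stmt17_general (n : ℕ) (θ : ℕ → ℕ)
    (hθ : ∀ i, 1 ≤ i → Odd (θ i) ∧ θ i ∣ i ∧ ∀ e : ℕ, Odd e → e ∣ i → e ≤ θ i) :
    Filter.Tendsto
      (fun t : ℝ => ∑' i : ℕ, (n : ℝ) ^ θ (i + 1) * t ^ (i + 1) / ((i : ℝ) + 1))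
      (nhdsWithin (1 / (n : ℝ)) (Set.Ioo 0 (1 / (n : ℝ)))) Filter.atTop := by
  rcases Nat.eq_zero_or_pos n with rfl | hn
  · simp -- `1 / 0 = 0` in `ℝ`, so the interval is empty
  have hθ_le (i : ℕ) : θ (i + 1) ≤ i + 1 :=
    Nat.le_of_dvd i.succ_pos (hθ (i + 1) (by omega)).2.1
  have hθ_odd (k : ℕ) : θ (2 * k + 1) = 2 * k + 1 :=
    le_antisymm (hθ_le (2 * k)) ((hθ _ (by omega)).2.2 _ (odd_two_mul_add_one k) dvd_rfl)
  refine tendsto_tsum_nhdsWithin_atTop (fun i => by fun_prop) (fun i t ht => ?_)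
    (fun t ht => summable_pow_mul_pow_div_of_lt_inv hn hθ_le ht.1.le ht.2)
    (tendsto_sum_range_pow_mul_inv_pow_div_atTop hn.ne' hθ_odd)
  have := ht.1
  positivity

/-- Let `θ i` be the largest odd divisor of `i ≥ 1` and `n ≥ 2` an integer.  Then the series
`Σ_{i=1}^∞ n^{θ(i)} t^i / i` tends to `+∞` as the real number `t` increases to `1/n`
(through `0 < t < 1/n`). -/
theorem stmt17 (n : ℕ) (hn : 2 ≤ n) (θ : ℕ → ℕ)
    (hθ : ∀ i, 1 ≤ i → Odd (θ i) ∧ θ i ∣ i ∧ ∀ e : ℕ, Odd e → e ∣ i → e ≤ θ i) :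
    Filter.Tendsto
      (fun t : ℝ => ∑' i : ℕ, (n : ℝ) ^ θ (i + 1) * t ^ (i + 1) / ((i : ℝ) + 1))
      (nhdsWithin (1 / (n : ℝ)) (Set.Ioo 0 (1 / (n : ℝ)))) Filter.atTop :=
  stmt17_general n θ hθ
end
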